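/- arXiv:1204.3366 — 2 statements merged into one kernel-verified Lean document; each statement's English description precedes it below -/
import Mathlib

section
/- Let A = ⊕_{i∈ℤ} Aᵢ be a ℤ-graded ring. Then A is strongly graded if and only if 1 ∈ A₁A₋₁ and 1 ∈ A₋₁A₁. -/
/-- The product of two additive subgroups of a ring: the additive subgroup
generated by all products `s * t` with `s ∈ S`, `t ∈ T`. -/
def sgMul {A : Type} [Ring A] (S T : AddSubgroup A) : AddSubgroup A :=
  AddSubgroup.closure {x | ∃ s ∈ S, ∃ t ∈ T, x = s * t}

/-- A ℤ-graded ring `A = ⊕ᵢ Aᵢ` is *strongly graded* if `AᵢAⱼ = Aᵢ₊ⱼ` for all `i, j`. -/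
def IsStronglyGraded {A : Type} [Ring A] (𝒜 : ℤ → AddSubgroup A) : Prop :=
  ∀ i j : ℤ, sgMul (𝒜 i) (𝒜 j) = 𝒜 (i + j)

/-!
Products of graded pieces live in the ordered monoid of ℤ-submodules of `A`, where the
grading says `Aᵢ * Aⱼ ≤ Aᵢ₊ⱼ`. If `1 ≤ Aᵢ * A₋ᵢ` for `i = ±1`, then, since
`1 ≤ a * b` and `1 ≤ c * d` give `1 ≤ a * (c * d) * b`, the same holds for every
`i ∈ ℤ`; and then `Aᵢ₊ⱼ ≤ Aᵢ * A₋ᵢ * Aᵢ₊ⱼ ≤ Aᵢ * Aⱼ`.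
-/

section OrderedMonoid

variable {M : Type*} [Monoid M] [Preorder M] [MulLeftMono M] [MulRightMono M]

theorem one_le_mul_mul_mul_of_one_le_mul {a b c d : M} (hab : 1 ≤ a * b) (hcd : 1 ≤ c * d) :
    1 ≤ a * c * (d * b) :=
  calc 1 ≤ a * b := hab
    _ = a * 1 * b := by rw [mul_one]
    _ ≤ a * (c * d) * b := mul_le_mul_left (mul_le_mul_right hcd a) b
    _ = a * c * (d * b) := by simp only [mul_assoc]

variable {f : ℤ → M}

theorem one_le_mul_neg_of_one_le_mul_neg_one (hmul : ∀ i j, f i * f j ≤ f (i + j))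
    (h₁ : 1 ≤ f 1 * f (-1)) (h₂ : 1 ≤ f (-1) * f 1) (i : ℤ) : 1 ≤ f i * f (-i) := by
  have add_closed : ∀ a b, 1 ≤ f a * f (-a) → 1 ≤ f b * f (-b) →
      1 ≤ f (a + b) * f (-(a + b)) := fun a b ha hb =>
    (one_le_mul_mul_mul_of_one_le_mul ha hb).trans <|
      mul_le_mul' (hmul a b) (by simpa only [neg_add_rev] using hmul (-b) (-a))
  have h₂' : 1 ≤ f (-1) * f (-(-1)) := by rwa [neg_neg]
  induction i using Int.induction_on with
  | zero => simpa using add_closed 1 (-1) h₁ h₂'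
  | succ i ih => exact add_closed i 1 ih h₁
  | pred i ih => simpa only [sub_eq_add_neg] using add_closed (-i) (-1) ih h₂'

theorem le_mul_of_one_le_mul_neg (hmul : ∀ i j, f i * f j ≤ f (i + j)) {i : ℤ}
    (hi : 1 ≤ f i * f (-i)) (j : ℤ) : f (i + j) ≤ f i * f j :=
  calc f (i + j) = 1 * f (i + j) := (one_mul _).symm
    _ ≤ f i * f (-i) * f (i + j) := mul_le_mul_left hi _
    _ = f i * (f (-i) * f (i + j)) := mul_assoc _ _ _
    _ ≤ f i * f j := mul_le_mul_right (by simpa using hmul (-i) (i + j)) _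

end OrderedMonoid

theorem forall_mul_eq_add_iff_one_le_mul_neg_one {M : Type*} [Monoid M] [PartialOrder M]
    [MulLeftMono M] [MulRightMono M] {f : ℤ → M} (hmul : ∀ i j, f i * f j ≤ f (i + j))
    (hone : 1 ≤ f 0) :
    (∀ i j, f i * f j = f (i + j)) ↔ 1 ≤ f 1 * f (-1) ∧ 1 ≤ f (-1) * f 1 := by
  refine ⟨fun h => ⟨?_, ?_⟩, fun ⟨h₁, h₂⟩ i j => ?_⟩
  · simpa [h 1 (-1)] using hone
  · simpa [h (-1) 1] using hone
  · exact (hmul i j).antisymm <| le_mul_of_one_le_mul_neg hmul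
      (one_le_mul_neg_of_one_le_mul_neg_one hmul h₁ h₂ i) j

theorem toIntSubmodule_sgMul {A : Type} [Ring A] (S T : AddSubgroup A) :
    (sgMul S T).toIntSubmodule = S.toIntSubmodule * T.toIntSubmodule := by
  refine le_antisymm ?_ ?_
  · show sgMul S T ≤ (S.toIntSubmodule * T.toIntSubmodule).toAddSubgroup
    refine (AddSubgroup.closure_le _).mpr ?_
    rintro _ ⟨s, hs, t, ht, rfl⟩
    exact Submodule.mul_mem_mul hs ht
  · exact Submodule.mul_le.mpr fun s hs t ht => AddSubgroup.subset_closure ⟨s, hs, t, ht, rfl⟩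

theorem one_mem_sgMul_iff {A : Type} [Ring A] (S T : AddSubgroup A) :
    (1 : A) ∈ sgMul S T ↔ 1 ≤ S.toIntSubmodule * T.toIntSubmodule := by
  rw [← toIntSubmodule_sgMul, Submodule.one_le]
  rfl

/-- Let `A = ⊕_{i∈ℤ} Aᵢ` be a ℤ-graded ring.  Then `A` is strongly graded
if and only if `1 ∈ A₁A₋₁` and `1 ∈ A₋₁A₁`. -/
theorem strongly_graded_iff_one_mem {A : Type} [Ring A]
    (𝒜 : ℤ → AddSubgroup A) [GradedRing 𝒜] :
    IsStronglyGraded 𝒜 ↔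
      ((1 : A) ∈ sgMul (𝒜 1) (𝒜 (-1)) ∧ (1 : A) ∈ sgMul (𝒜 (-1)) (𝒜 1)) := by
  have hmul (i j : ℤ) : AddSubgroup.toIntSubmodule (𝒜 i) * AddSubgroup.toIntSubmodule (𝒜 j) ≤
      AddSubgroup.toIntSubmodule (𝒜 (i + j)) :=
    Submodule.mul_le.mpr fun _ hs _ ht => SetLike.mul_mem_graded (A := 𝒜) hs ht
  have hone : 1 ≤ AddSubgroup.toIntSubmodule (𝒜 0) :=
    Submodule.one_le.mpr (SetLike.GradedOne.one_mem (A := 𝒜))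
  rw [one_mem_sgMul_iff, one_mem_sgMul_iff, ← forall_mul_eq_add_iff_one_le_mul_neg_one hmul hone]
  simp only [IsStronglyGraded, ← toIntSubmodule_sgMul, AddSubgroup.toIntSubmodule.injective.eq_iff]
end

section
/- Let E be a finite directed graph with no sources, E⁰ = {v₁,...,vₙ}, and for each i choose an edge eᵢ with r(eᵢ) = vᵢ. Set t₊ = e₁ + ... + eₙ and t₋ = e₁* + ... + eₙ* in L_K(E). Then t₋t₊ = 1 and t₊t₋ is an idempotent, and L_K(E) is graded isomorphic to the corner skew Laurent polynomial ring L_K(E)₀[t₊, t₋, φ], where φ(a) = t₊ a t₋. -/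
/-- A finite directed graph. -/
structure DirGraph where
  V : Type
  E : Type
  [fintypeV : Fintype V]
  [fintypeE : Fintype E]
  [decEqV : DecidableEq V]
  [decEqE : DecidableEq E]
  /-- source of an edge -/
  s : E → V
  /-- range of an edge -/
  r : E → V

attribute [instance] DirGraph.fintypeV DirGraph.fintypeE DirGraph.decEqV DirGraph.decEqE

namespace DirGraph
/-- A sink is a vertex emitting no edges. -/
def IsSink (G : DirGraph) (v : G.V) : Prop := ∀ e : G.E, G.s e ≠ v
/-- A source is a vertex receiving no edges. -/
def IsSource (G : DirGraph) (v : G.V) : Prop := ∀ e : G.E, G.r e ≠ v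
end DirGraph

/-- Generators of the Leavitt path algebra: vertices, edges and ghost edges. -/
inductive LGen (G : DirGraph) : Type
  | vert (v : G.V)
  | edge (e : G.E)
  | ghost (e : G.E)

open FreeAlgebra in
/-- The defining relations of the Leavitt path algebra of a finite graph. -/
inductive LRel (K : Type) [Field K] (G : DirGraph) :
    FreeAlgebra K (LGen G) → FreeAlgebra K (LGen G) → Prop
  | vert_mul (v w : G.V) : LRel K G (ι K (LGen.vert v) * ι K (LGen.vert w))
      (if v = w then ι K (LGen.vert v) else 0)
  | sum_verts : LRel K G (∑ v : G.V, ι K (LGen.vert v)) 1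
  | s_edge (e : G.E) : LRel K G (ι K (LGen.vert (G.s e)) * ι K (LGen.edge e)) (ι K (LGen.edge e))
  | edge_r (e : G.E) : LRel K G (ι K (LGen.edge e) * ι K (LGen.vert (G.r e))) (ι K (LGen.edge e))
  | r_ghost (e : G.E) : LRel K G (ι K (LGen.vert (G.r e)) * ι K (LGen.ghost e)) (ι K (LGen.ghost e))
  | ghost_s (e : G.E) : LRel K G (ι K (LGen.ghost e) * ι K (LGen.vert (G.s e))) (ι K (LGen.ghost e))
  | ck1 (e f : G.E) : LRel K G (ι K (LGen.ghost e) * ι K (LGen.edge f))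
      (if e = f then ι K (LGen.vert (G.r e)) else 0)
  | ck2 (v : G.V) (h : ¬ G.IsSink v) :
      LRel K G (∑ e ∈ Finset.univ.filter (fun e => G.s e = v),
        ι K (LGen.edge e) * ι K (LGen.ghost e)) (ι K (LGen.vert v))

/-- The Leavitt path algebra of a finite graph `G` over the field `K`. -/
def LPA (K : Type) [Field K] (G : DirGraph) : Type := RingQuot (LRel K G)

instance (K : Type) [Field K] (G : DirGraph) : Ring (LPA K G) :=
  inferInstanceAs (Ring (RingQuot (LRel K G)))
instance (K : Type) [Field K] (G : DirGraph) : Algebra K (LPA K G) :=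
  inferInstanceAs (Algebra K (RingQuot (LRel K G)))

/-- The image of a generator in the Leavitt path algebra. -/
def LPA.gen (K : Type) [Field K] (G : DirGraph) (g : LGen G) : LPA K G :=
  RingQuot.mkAlgHom K (LRel K G) (FreeAlgebra.ι K g)

/-- The vertex idempotent `v ∈ L_K(G)`. -/
def LPA.vert (K : Type) [Field K] (G : DirGraph) (v : G.V) : LPA K G :=
  LPA.gen K G (LGen.vert v)

/-- Weight of a generator: `deg v = 0`, `deg e = 1`, `deg e* = -1`. -/
def LGen.wt {G : DirGraph} : LGen G → ℤ
  | .vert _ => 0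
  | .edge _ => 1
  | .ghost _ => -1

/-- The degree-`n` component of the natural ℤ-grading of the Leavitt path algebra:
the `K`-span of all monomials in the generators of total weight `n`. -/
def lpaComp (K : Type) [Field K] (G : DirGraph) (n : ℤ) : Submodule K (LPA K G) :=
  Submodule.span K {x | ∃ l : List (LGen G),
    (l.map LGen.wt).sum = n ∧ x = (l.map (LPA.gen K G)).prod}

/-- `L_K(G)` is strongly graded: `AᵢAⱼ = Aᵢ₊ⱼ` for all `i, j ∈ ℤ`. -/
def LPAStronglyGraded (K : Type) [Field K] (G : DirGraph) : Prop :=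
  ∀ m n : ℤ, lpaComp K G m * lpaComp K G n = lpaComp K G (m + n)


/-!
Relation (CK1) gives `e* f = δ_{e,f} r(e)`, so `t₋t₊ = Σ_v r(c v) = Σ_v v = 1` because `r ∘ c = id`.
Everything else holds in any `ℤ`-graded monoid with elements `t₊ ∈ A₁`, `t₋ ∈ A₋₁` and `t₋t₊ = 1`:
`p = t₊t₋` is idempotent, conjugation `a ↦ t₊ a t₋` preserves `A₀`, and every `x ∈ Aₙ` factors
as `x = (x t₋ⁿ) t₊ⁿ` with `x t₋ⁿ ∈ A₀` (dually `x = t₋ⁿ (t₊ⁿ x)` for `x ∈ A₋ₙ`).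
-/

section CornerSkewLaurent

variable {R S : Type*} [Monoid R] [SetLike S R] {A : ℤ → S} [SetLike.GradedMonoid A] {tp tm : R}

theorem isIdempotentElem_mul_of_mul_eq_one (h : tm * tp = 1) : IsIdempotentElem (tp * tm) := by
  rw [IsIdempotentElem, mul_assoc, ← mul_assoc tm, h, one_mul]

theorem mul_mul_mem_graded_zero (htp : tp ∈ A 1) (htm : tm ∈ A (-1)) {a : R} (ha : a ∈ A 0) :
    tp * a * tm ∈ A 0 := by
  simpa using SetLike.mul_mem_graded (SetLike.mul_mem_graded htp ha) htm

theorem mem_graded_natCast_iff (htp : tp ∈ A 1) (htm : tm ∈ A (-1)) (h : tm * tp = 1) (n : ℕ)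
    {x : R} : x ∈ A n ↔ ∃ a ∈ A 0, x = a * tp ^ n := by
  constructor
  · intro hx
    refine ⟨x * tm ^ n, ?_, by rw [mul_assoc, pow_mul_pow_eq_one n h, mul_one]⟩
    simpa using SetLike.mul_mem_graded hx (SetLike.pow_mem_graded n htm)
  · rintro ⟨a, ha, rfl⟩
    simpa using SetLike.mul_mem_graded ha (SetLike.pow_mem_graded n htp)

theorem mem_graded_neg_natCast_iff (htp : tp ∈ A 1) (htm : tm ∈ A (-1)) (h : tm * tp = 1)
    (n : ℕ) {x : R} : x ∈ A (-n) ↔ ∃ a ∈ A 0, x = tm ^ n * a := by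
  constructor
  · intro hx
    refine ⟨tp ^ n * x, ?_, by rw [← mul_assoc, pow_mul_pow_eq_one n h, one_mul]⟩
    simpa using SetLike.mul_mem_graded (SetLike.pow_mem_graded n htp) hx
  · rintro ⟨a, ha, rfl⟩
    simpa using SetLike.mul_mem_graded (SetLike.pow_mem_graded n htm) ha

end CornerSkewLaurent

namespace LPA

variable {K : Type} [Field K] {G : DirGraph}

theorem gen_ghost_mul_gen_edge (e f : G.E) :
    gen K G (.ghost e) * gen K G (.edge f) = if e = f then vert K G (G.r e) else 0 := by
  have h := RingQuot.mkAlgHom_rel K (LRel.ck1 (K := K) e f)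
  rw [map_mul, apply_ite (RingQuot.mkAlgHom K _), map_zero] at h
  exact h

theorem sum_vert : ∑ v, vert K G v = 1 := by
  have h := RingQuot.mkAlgHom_rel K (LRel.sum_verts (K := K) (G := G))
  rw [map_sum, map_one] at h
  exact h

theorem sum_ghost_mul_sum_edge {c : G.V → G.E} (hc : ∀ v, G.r (c v) = v) :
    (∑ v, gen K G (.ghost (c v))) * ∑ v, gen K G (.edge (c v)) = 1 := by
  have hinj : c.Injective := Function.LeftInverse.injective hc
  simp_rw [Finset.sum_mul_sum, gen_ghost_mul_gen_edge, hinj.eq_iff, Finset.sum_ite_eq,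
    Finset.mem_univ, if_true, hc, sum_vert]

end LPA

section Grading

variable {K : Type} [Field K] {G : DirGraph}

theorem lpaComp_mul_le (m n : ℤ) : lpaComp K G m * lpaComp K G n ≤ lpaComp K G (m + n) := by
  rw [lpaComp, lpaComp, Submodule.span_mul_span]
  apply Submodule.span_mono
  rintro _ ⟨_, ⟨l, rfl, rfl⟩, _, ⟨l', rfl, rfl⟩, rfl⟩
  exact ⟨l ++ l', by simp, by simp⟩

instance : SetLike.GradedMonoid (lpaComp K G) where
  one_mem := Submodule.subset_span ⟨[], by simp, by simp⟩
  mul_mem _ _ _ _ hx hy := lpaComp_mul_le _ _ (Submodule.mul_mem_mul hx hy)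

theorem LPA.gen_mem_lpaComp (g : LGen G) : LPA.gen K G g ∈ lpaComp K G g.wt :=
  Submodule.subset_span ⟨[g], by simp, by simp⟩

end Grading

theorem lpa_is_corner_skew_laurent_general (K : Type) [Field K] (G : DirGraph)
    (c : G.V → G.E) (hc : ∀ v, G.r (c v) = v) :
    letI tp : LPA K G := ∑ v : G.V, LPA.gen K G (LGen.edge (c v))
    letI tm : LPA K G := ∑ v : G.V, LPA.gen K G (LGen.ghost (c v))
    tm * tp = 1 ∧ (tp * tm) * (tp * tm) = tp * tm ∧
      tp ∈ lpaComp K G 1 ∧ tm ∈ lpaComp K G (-1) ∧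
      (∀ a ∈ lpaComp K G 0, tp * a * tm ∈ lpaComp K G 0 ∧
        tp * (tp * a * tm) * tm ∈ lpaComp K G 0 ∧
        a * tm = tm * (tp * a * tm) ∧ tp * a = (tp * a * tm) * tp) ∧
      (∀ n : ℕ, (lpaComp K G (n : ℤ) : Set (LPA K G)) =
          {x | ∃ a ∈ lpaComp K G 0, x = a * tp ^ n} ∧
        (lpaComp K G (-(n : ℤ)) : Set (LPA K G)) =
          {x | ∃ a ∈ lpaComp K G 0, x = tm ^ n * a}) := by
  set tp : LPA K G := ∑ v, LPA.gen K G (.edge (c v))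
  set tm : LPA K G := ∑ v, LPA.gen K G (.ghost (c v))
  have htp : tp ∈ lpaComp K G 1 :=
    Submodule.sum_mem _ fun v _ => LPA.gen_mem_lpaComp (.edge (c v))
  have htm : tm ∈ lpaComp K G (-1) :=
    Submodule.sum_mem _ fun v _ => LPA.gen_mem_lpaComp (.ghost (c v))
  have h : tm * tp = 1 := LPA.sum_ghost_mul_sum_edge hc
  refine ⟨h, isIdempotentElem_mul_of_mul_eq_one h, htp, htm, fun a ha => ?_, fun n => ?_⟩
  · have hφa := mul_mul_mem_graded_zero htp htm ha
    refine ⟨hφa, mul_mul_mem_graded_zero htp htm hφa, ?_, ?_⟩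
    · simp only [← mul_assoc, h, one_mul]
    · simp only [mul_assoc, h, mul_one]
  · exact ⟨Set.ext fun _ => mem_graded_natCast_iff htp htm h n,
      Set.ext fun _ => mem_graded_neg_natCast_iff htp htm h n⟩

/-- Let `E` be a finite directed graph with no sources; for each vertex
`v` choose an edge `c v` with `r (c v) = v`, and set `t₊ = Σ_v c v`, `t₋ = Σ_v (c v)*` in
`L_K(E)`.  Then `t₋t₊ = 1` and `t₊t₋` is an idempotent, and `L_K(E)` is graded isomorphic
to the corner skew Laurent polynomial ring `L_K(E)₀[t₊, t₋, φ]` with `φ(a) = t₊ a t₋`: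
`t₊` has degree `1`, `t₋` has degree `-1`, `φ` maps the degree-zero component `L_K(E)₀`
into the corner `p L_K(E)₀ p` (`p = t₊t₋`), the skew relations `a t₋ = t₋ φ(a)` and
`t₊ a = φ(a) t₊` hold, and the homogeneous components are
`L_K(E)ₙ = L_K(E)₀ · t₊ⁿ` and `L_K(E)₋ₙ = t₋ⁿ · L_K(E)₀` for `n ≥ 0`. -/
theorem lpa_is_corner_skew_laurent (K : Type) [Field K] (G : DirGraph)
    (hns : ¬ ∃ v : G.V, G.IsSource v) (c : G.V → G.E) (hc : ∀ v, G.r (c v) = v) :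
    letI tp : LPA K G := ∑ v : G.V, LPA.gen K G (LGen.edge (c v))
    letI tm : LPA K G := ∑ v : G.V, LPA.gen K G (LGen.ghost (c v))
    tm * tp = 1 ∧ (tp * tm) * (tp * tm) = tp * tm ∧
      tp ∈ lpaComp K G 1 ∧ tm ∈ lpaComp K G (-1) ∧
      (∀ a ∈ lpaComp K G 0, tp * a * tm ∈ lpaComp K G 0 ∧
        tp * (tp * a * tm) * tm ∈ lpaComp K G 0 ∧
        a * tm = tm * (tp * a * tm) ∧ tp * a = (tp * a * tm) * tp) ∧
      (∀ n : ℕ, (lpaComp K G (n : ℤ) : Set (LPA K G)) =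
          {x | ∃ a ∈ lpaComp K G 0, x = a * tp ^ n} ∧
        (lpaComp K G (-(n : ℤ)) : Set (LPA K G)) =
          {x | ∃ a ∈ lpaComp K G 0, x = tm ^ n * a}) :=
  lpa_is_corner_skew_laurent_general K G c hc
end
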